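/- For any real κ, any involution σ on a Hilbert space H, and any unit vector ψ ∈ H, the operator identity e^{-κσ}|ψ⟩ = 2A ⟨0|_a e^{-i(Wσ ⊗ X_a + bI ⊗ X_a)} (|ψ⟩ ⊗ |0⟩_a) holds, where the ancilla is a qubit, X_a is the Pauli X on the ancilla, A = e^{|κ|}/2, W = (1/2)arccos(e^{-2|κ|}), b = sign(κ)W, and ⟨0|_a denotes the partial inner product projecting the ancilla onto |0⟩. -/

import Mathlib

open Matrix
open scoped Kronecker

/-- RBM normalization `A(κ) = e^{|κ|}/2`. -/
noncomputable def Aparam (κ : ℝ) : ℝ := Real.exp |κ| / 2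

/-- RBM weight `W(κ) = (1/2) arccos(e^{-2|κ|})`. -/
noncomputable def Wparam (κ : ℝ) : ℝ := Real.arccos (Real.exp (-2 * |κ|)) / 2

/-- RBM bias `b(κ) = sign(κ) W(κ)`. -/
noncomputable def bparam (κ : ℝ) : ℝ := Real.sign κ * Wparam κ

/-- Pauli X on the ancilla qubit. -/
def PX : Matrix (Fin 2) (Fin 2) ℂ := !![0, 1; 1, 0]

/-!
Since `σ² = 1`, the exponential of `z σ` factors through the algebra map `ℂ × ℂ → A` sending the
unit idempotents to the spectral projections `(1 ± σ)/2`, so `e^{zσ} = cosh z + sinh z · σ`.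
On `H ⊗ ℂ²` the operators `S = σ ⊗ X` and `T = 1 ⊗ X` are commuting involutions, hence
`e^{-i(WS + bT)} = (cos W - i sin W · S)(cos b - i sin b · T)`. Its `⟨0|·|0⟩` ancilla block drops
the two terms carrying a single `X` and leaves `cos W cos b - sin W sin b · σ`. Finally `W` and `b`
are tuned so that `2A cos (W ∓ b) = e^{±κ}`, which makes the two coefficients `cosh κ` and
`-sinh κ`.
-/

open NormedSpace

section Involution

variable {A : Type*} [NormedRing A] [NormedAlgebra ℂ A] [Algebra ℚ A] {N : A}

/-- `(a, b) ↦ a (1 + N)/2 + b (1 - N)/2`, written in the basis `1, N`. -/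
noncomputable def algHomOfMulSelfEqOne (hN : N * N = 1) : ℂ × ℂ →ₐ[ℂ] A where
  toFun p := ((p.1 + p.2) / 2) • 1 + ((p.1 - p.2) / 2) • N
  map_one' := by simp
  map_mul' p q := by
    simp only [Prod.fst_mul, Prod.snd_mul, add_mul, mul_add, smul_mul_smul_comm, one_mul,
      mul_one, hN]
    module
  map_zero' := by simp
  map_add' p q := by simp only [Prod.fst_add, Prod.snd_add]; module
  commutes' c := by simp [Algebra.algebraMap_eq_smul_one]

theorem exp_smul_eq_cosh_add_sinh (hN : N * N = 1) (z : ℂ) :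
    exp (z • N) = Complex.cosh z • (1 : A) + Complex.sinh z • N := by
  set φ := algHomOfMulSelfEqOne hN
  have hφ : Continuous φ := by
    show Continuous fun p : ℂ × ℂ => ((p.1 + p.2) / 2) • (1 : A) + ((p.1 - p.2) / 2) • N
    fun_prop
  have hz : z • N = φ (z, -z) := by
    show _ = ((z + -z) / 2) • (1 : A) + ((z - -z) / 2) • N
    rw [add_neg_cancel, zero_div, zero_smul, zero_add, sub_neg_eq_add, add_self_div_two]
  have hexp : exp ((z, -z) : ℂ × ℂ) = (Complex.exp z, Complex.exp (-z)) := by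
    ext <;> simp [Prod.fst_exp, Prod.snd_exp, Complex.exp_eq_exp_ℂ]
  rw [hz, ← map_exp φ hφ, hexp]
  rfl

end Involution

namespace Matrix

theorem sub_kronecker {α l m n p : Type*} [Ring α] (A₁ A₂ : Matrix l m α) (B : Matrix n p α) :
    (A₁ - A₂) ⊗ₖ B = A₁ ⊗ₖ B - A₂ ⊗ₖ B := by
  ext; simp [sub_mul]

theorem kronecker_mulVec_apply_of_single {α l m n p : Type*} [CommSemiring α] [Fintype m]
    [Fintype n] [DecidableEq n] (K : Matrix l m α) (B : Matrix p n α) (ψ : m → α) (i : l)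
    (j : n) (k : p) :
    ((K ⊗ₖ B) *ᵥ fun q : m × n => ψ q.1 * if q.2 = j then 1 else 0) (i, k) =
      B k j * (K *ᵥ ψ) i := by
  simp [mulVec, dotProduct, Fintype.sum_prod_type, Finset.mul_sum, mul_left_comm, mul_comm]

variable {n m : Type*} [Fintype n] [DecidableEq n] [Fintype m] [DecidableEq m]

theorem exp_smul_eq_cosh_add_sinh {N : Matrix n n ℂ} (hN : N * N = 1) (z : ℂ) :
    exp (z • N) = Complex.cosh z • (1 : Matrix n n ℂ) + Complex.sinh z • N := by
  -- `exp` only sees the topology, so any Banach algebra norm on matrices will do.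
  let : NormedRing (Matrix n n ℂ) := Matrix.linftyOpNormedRing
  let : NormedAlgebra ℂ (Matrix n n ℂ) := Matrix.linftyOpNormedAlgebra
  exact _root_.exp_smul_eq_cosh_add_sinh hN z

theorem exp_neg_I_smul_kronecker {σ : Matrix n n ℂ} {X : Matrix m m ℂ} (hσ : σ * σ = 1)
    (hX : X * X = 1) (w b : ℂ) :
    exp ((-Complex.I) • ((w • σ + b • 1) ⊗ₖ X)) =
      ((Complex.cos w * Complex.cos b) • 1 - (Complex.sin w * Complex.sin b) • σ) ⊗ₖ
          (1 : Matrix m m ℂ) -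
        Complex.I •
          (((Complex.cos w * Complex.sin b) • 1 + (Complex.sin w * Complex.cos b) • σ) ⊗ₖ X) := by
  set S := σ ⊗ₖ X
  set T := (1 : Matrix n n ℂ) ⊗ₖ X
  have hS : S * S = 1 := by rw [← mul_kronecker_mul, hσ, hX, one_kronecker_one]
  have hT : T * T = 1 := by rw [← mul_kronecker_mul, hX, one_mul, one_kronecker_one]
  have hST : S * T = σ ⊗ₖ 1 := by rw [← mul_kronecker_mul, mul_one, hX]
  have hTS : T * S = σ ⊗ₖ 1 := by rw [← mul_kronecker_mul, one_mul, hX]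
  have hsplit : (-Complex.I) • ((w • σ + b • 1) ⊗ₖ X) =
      (w * -Complex.I) • S + (b * -Complex.I) • T := by
    rw [add_kronecker, smul_kronecker, smul_kronecker, smul_add, smul_smul, smul_smul,
      mul_comm w, mul_comm b]
  have hcomm : Commute ((w * -Complex.I) • S) ((b * -Complex.I) • T) :=
    ((show Commute S T from hST.trans hTS.symm).smul_left _).smul_right _
  rw [hsplit, exp_add_of_commute _ _ hcomm, exp_smul_eq_cosh_add_sinh hS,
    exp_smul_eq_cosh_add_sinh hT]
  simp only [mul_neg, Complex.cosh_neg, Complex.sinh_neg, Complex.cosh_mul_I, Complex.sinh_mul_I,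
    add_mul, mul_add, smul_mul_smul_comm, one_mul, mul_one, hST, sub_kronecker, add_kronecker,
    smul_kronecker, one_kronecker_one]
  match_scalars <;> ring_nf
  rw [Complex.I_sq]
  ring

end Matrix

theorem PX_mul_self : PX * PX = 1 := by
  simp [PX, Matrix.one_fin_two]

theorem cos_two_mul_Wparam (κ : ℝ) : Real.cos (2 * Wparam κ) = Real.exp (-2 * |κ|) := by
  rw [Wparam, mul_div_cancel₀ _ two_ne_zero, Real.cos_arccos (by linarith [Real.exp_pos (-2 * |κ|)])
    (Real.exp_le_one_iff.2 (by linarith [abs_nonneg κ]))]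

theorem bparam_of_nonneg {κ : ℝ} (hκ : 0 ≤ κ) : bparam κ = Wparam κ := by
  rcases hκ.eq_or_lt with rfl | hκ
  · simp [bparam, Wparam]
  · rw [bparam, Real.sign_of_pos hκ, one_mul]

theorem bparam_of_nonpos {κ : ℝ} (hκ : κ ≤ 0) : bparam κ = -Wparam κ := by
  rcases hκ.eq_or_lt with rfl | hκ
  · simp [bparam, Wparam]
  · rw [bparam, Real.sign_of_neg hκ, neg_one_mul]

theorem two_mul_Aparam_mul_cos_sub (κ : ℝ) :
    2 * Aparam κ * Real.cos (Wparam κ - bparam κ) = Real.exp κ := by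
  rcases le_total 0 κ with hκ | hκ
  · rw [bparam_of_nonneg hκ, sub_self, Real.cos_zero, Aparam, abs_of_nonneg hκ]
    ring
  · rw [bparam_of_nonpos hκ, sub_neg_eq_add, ← two_mul, cos_two_mul_Wparam, Aparam,
      abs_of_nonpos hκ, mul_div_cancel₀ _ two_ne_zero, ← Real.exp_add]
    ring_nf

theorem two_mul_Aparam_mul_cos_add (κ : ℝ) :
    2 * Aparam κ * Real.cos (Wparam κ + bparam κ) = Real.exp (-κ) := by
  rcases le_total 0 κ with hκ | hκ
  · rw [bparam_of_nonneg hκ, ← two_mul, cos_two_mul_Wparam, Aparam, abs_of_nonneg hκ,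
      mul_div_cancel₀ _ two_ne_zero, ← Real.exp_add]
    ring_nf
  · rw [bparam_of_nonpos hκ, add_neg_cancel, Real.cos_zero, Aparam, abs_of_nonpos hκ]
    ring

theorem cosh_eq_two_mul_Aparam_mul (κ : ℝ) :
    Real.cosh κ = 2 * Aparam κ * (Real.cos (Wparam κ) * Real.cos (bparam κ)) := by
  rw [Real.cosh_eq, ← two_mul_Aparam_mul_cos_sub, ← two_mul_Aparam_mul_cos_add, Real.cos_sub,
    Real.cos_add]
  ring

theorem sinh_eq_two_mul_Aparam_mul (κ : ℝ) :
    Real.sinh κ = 2 * Aparam κ * (Real.sin (Wparam κ) * Real.sin (bparam κ)) := by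
  rw [Real.sinh_eq, ← two_mul_Aparam_mul_cos_sub, ← two_mul_Aparam_mul_cos_add, Real.cos_sub,
    Real.cos_add]
  ring

theorem rbm_block_encoding_general {d : ℕ} (κ : ℝ) (σ : Matrix (Fin d) (Fin d) ℂ)
    (hinv : σ * σ = 1)
    (ψ : Fin d → ℂ) :
    NormedSpace.exp ((-κ : ℂ) • σ) *ᵥ ψ =
      fun i : Fin d =>
        ((2 * Aparam κ : ℝ) : ℂ) *
          (NormedSpace.exp ((-Complex.I) •
              ((((Wparam κ : ℝ) : ℂ) • σ + ((bparam κ : ℝ) : ℂ) • (1 : Matrix (Fin d) (Fin d) ℂ)) ⊗ₖ PX)) *ᵥ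
            (fun p : Fin d × Fin 2 => ψ p.1 * if p.2 = 0 then 1 else 0)) (i, 0) := by
  have hcoeff : Complex.cosh (-κ) • (1 : Matrix (Fin d) (Fin d) ℂ) + Complex.sinh (-κ) • σ =
      ((2 * Aparam κ : ℝ) : ℂ) • ((Complex.cos (Wparam κ) * Complex.cos (bparam κ)) • 1 -
        (Complex.sin (Wparam κ) * Complex.sin (bparam κ)) • σ) := by
    rw [Complex.cosh_neg, Complex.sinh_neg, ← Complex.ofReal_cosh, ← Complex.ofReal_sinh,
      cosh_eq_two_mul_Aparam_mul, sinh_eq_two_mul_Aparam_mul]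
    push_cast
    module
  have hPX : PX 0 0 = 0 := rfl
  rw [Matrix.exp_smul_eq_cosh_add_sinh hinv, Matrix.exp_neg_I_smul_kronecker hinv PX_mul_self,
    hcoeff]
  funext i
  simp only [Matrix.sub_mulVec, Matrix.smul_mulVec, Pi.sub_apply, Pi.smul_apply,
    Matrix.kronecker_mulVec_apply_of_single, Matrix.one_apply_eq, hPX, one_mul, zero_mul,
    smul_eq_mul, mul_zero, sub_zero]

/-- `e^{-κσ}|ψ⟩ = 2A ⟨0|_a e^{-i(Wσ⊗X_a + bI⊗X_a)} (|ψ⟩⊗|0⟩_a)`. -/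
theorem rbm_block_encoding {d : ℕ} (κ : ℝ) (σ : Matrix (Fin d) (Fin d) ℂ)
    (hherm : σ.IsHermitian) (hinv : σ * σ = 1)
    (ψ : Fin d → ℂ) (hψ : star ψ ⬝ᵥ ψ = 1) :
    NormedSpace.exp ((-κ : ℂ) • σ) *ᵥ ψ =
      fun i : Fin d =>
        ((2 * Aparam κ : ℝ) : ℂ) *
          (NormedSpace.exp ((-Complex.I) •
              ((((Wparam κ : ℝ) : ℂ) • σ + ((bparam κ : ℝ) : ℂ) • (1 : Matrix (Fin d) (Fin d) ℂ)) ⊗ₖ PX)) *ᵥ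
            (fun p : Fin d × Fin 2 => ψ p.1 * if p.2 = 0 then 1 else 0)) (i, 0) :=
  rbm_block_encoding_general κ σ hinv ψ
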